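/- Every graph in the family 𝔗′ (the graphs with no locally irregular coloring: odd-length paths, odd-length cycles, and the recursively defined triangle-based family 𝔗) is a cactus; in particular, every member of 𝔗 contains no two cycles sharing more than one vertex. -/

import Mathlib

open SimpleGraph

/-- `v` has degree 2 in `G` and lies on a triangle of `G`. -/
def OnTriangleDeg2 {V : Type} (G : SimpleGraph V) (v : V) : Prop :=
  ∃ a b, a ≠ b ∧ G.Adj v a ∧ G.Adj v b ∧ G.Adj a b ∧ ∀ c, G.Adj v c → c = a ∨ c = b

/-- The graph obtained from `G` by attaching at `v` a path of length `m`
(`m` new vertices `inr 0, …, inr (m-1)`). -/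
def attachPath {V : Type} (G : SimpleGraph V) (v : V) (m : ℕ) : SimpleGraph (V ⊕ Fin m) :=
  SimpleGraph.fromRel fun a b =>
    (∃ x y, a = Sum.inl x ∧ b = Sum.inl y ∧ G.Adj x y) ∨
    (∃ i : Fin m, i.val = 0 ∧ a = Sum.inl v ∧ b = Sum.inr i) ∨
    (∃ i j : Fin m, i.val + 1 = j.val ∧ a = Sum.inr i ∧ b = Sum.inr j)

/-- The graph obtained from `G` by attaching at `v` a path of length `m` whose other
endpoint is a vertex of a new triangle (formed with the two new vertices `inr (inr 0)`,
`inr (inr 1)`). -/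
def attachPathTriangle {V : Type} (G : SimpleGraph V) (v : V) (m : ℕ) :
    SimpleGraph (V ⊕ (Fin m ⊕ Fin 2)) :=
  SimpleGraph.fromRel fun a b =>
    (∃ x y, a = Sum.inl x ∧ b = Sum.inl y ∧ G.Adj x y) ∨
    (∃ i : Fin m, i.val = 0 ∧ a = Sum.inl v ∧ b = Sum.inr (Sum.inl i)) ∨
    (∃ i j : Fin m, i.val + 1 = j.val ∧ a = Sum.inr (Sum.inl i) ∧ b = Sum.inr (Sum.inl j)) ∨
    (∃ i : Fin m, i.val = m - 1 ∧ ∃ t : Fin 2, a = Sum.inr (Sum.inl i) ∧ b = Sum.inr (Sum.inr t)) ∨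
    (a = Sum.inr (Sum.inr 0) ∧ b = Sum.inr (Sum.inr 1))

/-- The recursively defined family `𝔗`: it contains the triangle `K₃`, is closed under
isomorphism, and is closed under identifying a degree-2 vertex lying on a triangle with an
endpoint of a path of even (positive) length, or with an endpoint of a path of odd length
whose other endpoint is a vertex of a new triangle. -/
inductive InT : (V : Type) → SimpleGraph V → Prop
  | base : InT (Fin 3) ⊤
  | iso {V W : Type} {G : SimpleGraph V} {H : SimpleGraph W} :
      InT V G → Nonempty (G ≃g H) → InT W H
  | evenPath {V : Type} {G : SimpleGraph V} (v : V) (m : ℕ) :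
      InT V G → 0 < m → Even m → OnTriangleDeg2 G v → InT (V ⊕ Fin m) (attachPath G v m)
  | oddPathTriangle {V : Type} {G : SimpleGraph V} (v : V) (m : ℕ) :
      InT V G → Odd m → OnTriangleDeg2 G v →
      InT (V ⊕ (Fin m ⊕ Fin 2)) (attachPathTriangle G v m)

/-- The family `𝔗′`: members of `𝔗`, odd-length paths (paths on an even number `n ≥ 2` of
vertices) and odd-length cycles. -/
def InT' (V : Type) (G : SimpleGraph V) : Prop :=
  InT V G ∨
  (∃ n, Even n ∧ 2 ≤ n ∧ Nonempty (G ≃g pathGraph n)) ∨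
  (∃ n, Odd n ∧ 3 ≤ n ∧ Nonempty (G ≃g cycleGraph n))

/-- No two distinct cycles of `G` share more than one vertex. -/
def NoTwoCyclesShare {V : Type} (G : SimpleGraph V) : Prop :=
  ∀ (u v : V) (p : G.Walk u u) (q : G.Walk v v), p.IsCycle → q.IsCycle →
    {e | e ∈ p.edges} ≠ {e | e ∈ q.edges} →
    ({x | x ∈ p.support} ∩ {x | x ∈ q.support}).ncard ≤ 1

/-! Triangles and odd cycles are cacti because every cycle of a connected 2-regular graph uses all
of its edges, and odd paths are trees. Both attachment operations glue a path to a vertex of the old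
graph; every edge of that path is the only edge leaving some vertex set, hence a bridge, and no
cycle passes through a bridge. So every cycle of the new graph lies either in the old graph or in
the new triangle, two disjoint vertex sets, and the cactus property is inherited. -/

namespace SimpleGraph

variable {V W : Type} {G : SimpleGraph V} {H : SimpleGraph W}

theorem isBridge_of_forall_crossing_eq {S : Set V} {e₀ : Sym2 V}
    (hcut : ∀ x y, G.Adj x y → x ∈ S → y ∉ S → s(x, y) = e₀)
    {x y : V} (hxy : G.Adj x y) (hx : x ∈ S) (hy : y ∉ S) : G.IsBridge s(x, y) := by
  rintro ⟨q⟩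
  obtain ⟨d, -, hdS, hdS'⟩ := q.exists_boundary_dart S hx hy
  have hd := d.adj
  simp only [deleteEdges_adj, Set.mem_singleton_iff] at hd
  exact hd.2 ((hcut _ _ hd.1 hdS hdS').trans (hcut x y hxy hx hy).symm)

theorem Walk.IsCycle.support_subset_of_forall_crossing_eq {S : Set V} {e₀ : Sym2 V}
    (hcut : ∀ x y, G.Adj x y → x ∈ S → y ∉ S → s(x, y) = e₀) {u w : V} {p : G.Walk u u}
    (hp : p.IsCycle) (hw : w ∈ p.support) (hwS : w ∈ S) : ∀ z ∈ p.support, z ∈ S := by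
  classical
  intro z hz
  by_contra hzS
  obtain ⟨d, hd, hdS, hdS'⟩ :=
    ((p.takeUntil w hw).reverse.append (p.takeUntil z hz)).exists_boundary_dart S hwS hzS
  have hdp : d.edge ∈ p.edges := by
    have := List.mem_map_of_mem (f := Dart.edge) hd
    rw [← Walk.edges_eq_map_darts, Walk.edges_append, Walk.edges_reverse, List.mem_append,
      List.mem_reverse] at this
    exact this.elim (fun h => p.edges_takeUntil_subset_edges hw h)
      (fun h => p.edges_takeUntil_subset_edges hz h)
  exact (isBridge_of_forall_crossing_eq hcut d.adj hdS hdS').notMem_edges_of_isCycle hp hdp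

theorem Walk.setOf_mem_support_map (f : G →g H) {u v : V} (p : G.Walk u v) :
    {x | x ∈ (p.map f).support} = f '' {x | x ∈ p.support} := by
  ext
  simp [Walk.support_map]

theorem Walk.setOf_mem_edges_map (f : G →g H) {u v : V} (p : G.Walk u v) :
    {e | e ∈ (p.map f).edges} = Sym2.map f '' {e | e ∈ p.edges} := by
  ext
  simp [Walk.edges_map]

theorem Walk.IsCycle.induce {S : Set V} {u : V} {p : G.Walk u u} (hp : p.IsCycle)
    (hS : ∀ x ∈ p.support, x ∈ S) : (p.induce S hS).IsCycle := by
  rw [← isCycle_map_iff_of_injective (f := (Embedding.induce S).toHom) Subtype.val_injective,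
    map_induce]
  exact hp

theorem IsAcyclic.exists_mem_support_notMem_range (f : G ↪g H) (hG : G.IsAcyclic) {u : W}
    {p : H.Walk u u} (hp : p.IsCycle) : ∃ x ∈ p.support, x ∉ Set.range f := by
  by_contra! hpf
  exact (f.isoInduceRange.isAcyclic_iff.mp hG) _ (hp.induce hpf)

theorem Walk.IsCycle.setOf_mem_edges_eq_edgeSet [G.LocallyFinite] (hG : G.Connected)
    (hreg : G.IsRegularOfDegree 2) {u : V} {p : G.Walk u u} (hp : p.IsCycle) :
    {e | e ∈ p.edges} = G.edgeSet := by
  have hnbr : ∀ w ∈ p.support, ∀ x, G.Adj w x → s(w, x) ∈ p.edges := by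
    intro w hw x hx
    have hcard : (G.neighborSet w).ncard = 2 := by
      rw [← coe_neighborFinset, Set.ncard_coe_finset, card_neighborFinset_eq_degree, hreg w]
    have heq : p.toSubgraph.neighborSet w = G.neighborSet w :=
      Set.eq_of_subset_of_ncard_le (p.toSubgraph.neighborSet_subset w)
        (by rw [hcard, hp.ncard_neighborSet_toSubgraph_eq_two hw]) (G.neighborSet w).toFinite
    rwa [← mem_neighborSet, ← heq, Subgraph.mem_neighborSet, ← Subgraph.mem_edgeSet,
      Walk.mem_edges_toSubgraph] at hx
  have hall : ∀ z, z ∈ p.support := by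
    intro z
    by_contra hz
    obtain ⟨d, -, hd, hd'⟩ :=
      (hG.preconnected u z).some.exists_boundary_dart {x | x ∈ p.support} p.start_mem_support hz
    exact hd' (p.snd_mem_support_of_mem_edges (hnbr _ hd _ d.adj))
  ext e
  induction e using Sym2.ind with
  | _ x y => exact ⟨fun h => p.adj_of_mem_edges h, fun h => hnbr _ (hall x) _ h⟩

theorem pathGraph_isAcyclic (n : ℕ) : (pathGraph n).IsAcyclic := by
  have hbridge (i j : Fin n) (hij : (i : ℕ) + 1 = j) : (pathGraph n).IsBridge s(i, j) := by
    have hcut : ∀ x y, (pathGraph n).Adj x y → x ∈ Set.Iic i → y ∉ Set.Iic i →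
        s(x, y) = s(i, j) := by
      intro x y hxy hx hy
      simp only [Set.mem_Iic, Fin.le_def, pathGraph_adj] at hx hy hxy
      obtain rfl : x = i := Fin.ext (by omega)
      obtain rfl : y = j := Fin.ext (by omega)
      rfl
    exact isBridge_of_forall_crossing_eq hcut (by simp [pathGraph_adj, hij])
      (Set.mem_Iic.mpr le_rfl) (by rw [Set.mem_Iic, Fin.le_def]; omega)
  rw [isAcyclic_iff_forall_isBridge]
  intro e he
  induction e using Sym2.ind with
  | _ i j =>
    rcases pathGraph_adj.mp he with h | h
    · exact hbridge i j h
    · exact Sym2.eq_swap ▸ hbridge j i h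

theorem cycleGraph_isRegularOfDegree_two (n : ℕ) : (cycleGraph (n + 3)).IsRegularOfDegree 2 :=
  fun _ => cycleGraph_degree_three_le

end SimpleGraph

section NoTwoCyclesShare

variable {V W : Type} {G : SimpleGraph V} {H : SimpleGraph W}

theorem NoTwoCyclesShare.comap (f : G →g H) (hf : Function.Injective f)
    (hH : NoTwoCyclesShare H) : NoTwoCyclesShare G := by
  intro u v p q hp hq hne
  have key := hH _ _ (p.map f) (q.map f) (hp.map hf) (hq.map hf) (by
    rwa [Walk.setOf_mem_edges_map, Walk.setOf_mem_edges_map,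
      (Set.image_injective.mpr (Sym2.map.injective hf)).ne_iff])
  rwa [Walk.setOf_mem_support_map, Walk.setOf_mem_support_map, ← Set.image_inter hf,
    Set.ncard_image_of_injective _ hf] at key

theorem NoTwoCyclesShare.of_iso (e : G ≃g H) (hG : NoTwoCyclesShare G) : NoTwoCyclesShare H :=
  hG.comap e.symm.toHom e.symm.injective

theorem NoTwoCyclesShare.ncard_le_one_map (f : G →g H) (hf : Function.Injective f)
    (hG : NoTwoCyclesShare G) {u v : V} {p : G.Walk u u} {q : G.Walk v v}
    (hp : p.IsCycle) (hq : q.IsCycle)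
    (hne : {e | e ∈ (p.map f).edges} ≠ {e | e ∈ (q.map f).edges}) :
    ({x | x ∈ (p.map f).support} ∩ {x | x ∈ (q.map f).support}).ncard ≤ 1 := by
  rw [Walk.setOf_mem_edges_map, Walk.setOf_mem_edges_map] at hne
  rw [Walk.setOf_mem_support_map, Walk.setOf_mem_support_map, ← Set.image_inter hf,
    Set.ncard_image_of_injective _ hf]
  exact hG _ _ _ _ hp hq fun h => hne (by rw [h])

theorem NoTwoCyclesShare.ncard_le_one_of_support_subset_range (f : G ↪g H)
    (hG : NoTwoCyclesShare G) {u v : W} {p : H.Walk u u} {q : H.Walk v v}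
    (hp : p.IsCycle) (hq : q.IsCycle) (hpf : ∀ x ∈ p.support, x ∈ Set.range f)
    (hqf : ∀ x ∈ q.support, x ∈ Set.range f) (hne : {e | e ∈ p.edges} ≠ {e | e ∈ q.edges}) :
    ({x | x ∈ p.support} ∩ {x | x ∈ q.support}).ncard ≤ 1 := by
  have key := (hG.of_iso f.isoInduceRange).ncard_le_one_map (Embedding.induce _).toHom
    Subtype.val_injective (hp.induce hpf) (hq.induce hqf)
  rw [Walk.map_induce, Walk.map_induce] at key
  exact key hne

theorem noTwoCyclesShare_of_isRegularOfDegree_two [G.LocallyFinite] (hG : G.Connected)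
    (hreg : G.IsRegularOfDegree 2) : NoTwoCyclesShare G :=
  fun _ _ _ _ hp hq hne => absurd ((hp.setOf_mem_edges_eq_edgeSet hG hreg).trans
    (hq.setOf_mem_edges_eq_edgeSet hG hreg).symm) hne

theorem SimpleGraph.IsAcyclic.noTwoCyclesShare (hG : G.IsAcyclic) : NoTwoCyclesShare G :=
  fun _ _ p _ hp _ _ => absurd hp (hG p)

end NoTwoCyclesShare

def IsCactus {V : Type} (G : SimpleGraph V) : Prop :=
  G.Connected ∧ NoTwoCyclesShare G

theorem IsCactus.of_iso {V W : Type} {G : SimpleGraph V} {H : SimpleGraph W} (e : G ≃g H)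
    (hG : IsCactus G) : IsCactus H :=
  ⟨e.connected_iff.mp hG.1, hG.2.of_iso e⟩

theorem isCactus_cycleGraph (n : ℕ) : IsCactus (cycleGraph (n + 3)) :=
  ⟨cycleGraph_connected, noTwoCyclesShare_of_isRegularOfDegree_two cycleGraph_connected
    (cycleGraph_isRegularOfDegree_two n)⟩

theorem isCactus_top_fin_three : IsCactus (⊤ : SimpleGraph (Fin 3)) :=
  cycleGraph_three_eq_top ▸ isCactus_cycleGraph 0

theorem isCactus_pathGraph (n : ℕ) : IsCactus (pathGraph (n + 1)) :=
  ⟨pathGraph_connected n, (pathGraph_isAcyclic _).noTwoCyclesShare⟩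

section AttachPath
variable {V : Type} {G : SimpleGraph V} {v : V} {m : ℕ}

@[simp] theorem attachPath_adj_inl_inl {x y : V} :
    (attachPath G v m).Adj (.inl x) (.inl y) ↔ G.Adj x y := by
  simpa [attachPath, G.adj_comm y x] using fun h => h.ne

@[simp] theorem attachPath_adj_inl_inr {x : V} {i : Fin m} :
    (attachPath G v m).Adj (.inl x) (.inr i) ↔ (i : ℕ) = 0 ∧ x = v := by
  simp [attachPath]

@[simp] theorem attachPath_adj_inr_inr {i j : Fin m} :
    (attachPath G v m).Adj (.inr i) (.inr j) ↔ (pathGraph m).Adj i j := by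
  simp [attachPath, pathGraph_adj]
  omega

variable (G v m) in
def attachPath.embBase : G ↪g attachPath G v m := ⟨.inl, attachPath_adj_inl_inl⟩

variable (G v m) in
def attachPath.embPath : pathGraph m ↪g attachPath G v m := ⟨.inr, attachPath_adj_inr_inr⟩

theorem attachPath.crossing_base_eq (hm : 0 < m) (a b : V ⊕ Fin m)
    (hab : (attachPath G v m).Adj a b) (ha : a ∈ Set.range Sum.inl)
    (hb : b ∉ Set.range Sum.inl) :
    s(a, b) = s(.inl v, .inr ⟨0, hm⟩) := by
  obtain ⟨x, rfl⟩ := ha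
  rcases b with y | i
  · exact absurd ⟨y, rfl⟩ hb
  · obtain ⟨hi, rfl⟩ := attachPath_adj_inl_inr.mp hab
    rw [show i = ⟨0, hm⟩ from Fin.ext hi]

theorem attachPath.support_subset_range_of_isCycle (hm : 0 < m) {u : V ⊕ Fin m}
    {p : (attachPath G v m).Walk u u} (hp : p.IsCycle) :
    ∀ x ∈ p.support, x ∈ Set.range (embBase G v m) := by
  obtain ⟨x, hx, hxr⟩ := (pathGraph_isAcyclic m).exists_mem_support_notMem_range (embPath G v m) hp
  rcases x with y | i
  · exact hp.support_subset_of_forall_crossing_eq (crossing_base_eq hm) hx ⟨y, rfl⟩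
  · exact absurd ⟨i, rfl⟩ hxr

theorem attachPath.connected (hG : G.Connected) : (attachPath G v m).Connected := by
  rw [connected_iff_exists_forall_reachable]
  refine ⟨.inl v, ?_⟩
  rintro (x | i)
  · exact (hG v x).map (embBase G v m).toHom
  · have h0 : (attachPath G v m).Adj (.inl v) (.inr ⟨0, i.pos⟩) := by simp
    exact h0.reachable.trans ((pathGraph_preconnected m _ i).map (embPath G v m).toHom)

theorem isCactus_attachPath (hm : 0 < m) (hG : IsCactus G) : IsCactus (attachPath G v m) :=
  ⟨attachPath.connected hG.1, fun _ _ _ _ hp hq =>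
    hG.2.ncard_le_one_of_support_subset_range (attachPath.embBase G v m) hp hq
      (attachPath.support_subset_range_of_isCycle hm hp)
      (attachPath.support_subset_range_of_isCycle hm hq)⟩

end AttachPath

section AttachPathTriangle

variable {V : Type} {G : SimpleGraph V} {v : V} {m : ℕ}

@[simp] theorem attachPathTriangle_adj_inl_inl {x y : V} :
    (attachPathTriangle G v m).Adj (.inl x) (.inl y) ↔ G.Adj x y := by
  simpa [attachPathTriangle, G.adj_comm y x] using fun h => h.ne

@[simp] theorem attachPathTriangle_adj_inl_path {x : V} {i : Fin m} :
    (attachPathTriangle G v m).Adj (.inl x) (.inr (.inl i)) ↔ (i : ℕ) = 0 ∧ x = v := by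
  simp [attachPathTriangle]

@[simp] theorem attachPathTriangle_adj_path_path {i j : Fin m} :
    (attachPathTriangle G v m).Adj (.inr (.inl i)) (.inr (.inl j)) ↔ (pathGraph m).Adj i j := by
  simp [attachPathTriangle, pathGraph_adj]
  omega

theorem attachPathTriangle_adj_triangle (hm : 0 < m) (a b : Fin 3) :
    (attachPathTriangle G v m).Adj
      (![.inr (.inl ⟨m - 1, by omega⟩), .inr (.inr 0), .inr (.inr 1)] a)
      (![.inr (.inl ⟨m - 1, by omega⟩), .inr (.inr 0), .inr (.inr 1)] b) ↔ a ≠ b := by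
  fin_cases a <;> fin_cases b <;> simp [attachPathTriangle]

variable (G v m) in
def attachPathTriangle.embBase : G ↪g attachPathTriangle G v m :=
  ⟨.inl, attachPathTriangle_adj_inl_inl⟩

variable (G v m) in
def attachPathTriangle.embPath : pathGraph m ↪g attachPathTriangle G v m :=
  ⟨Function.Embedding.inl.trans .inr, attachPathTriangle_adj_path_path⟩

variable (G v) in
def attachPathTriangle.embTriangle (hm : 0 < m) :
    (⊤ : SimpleGraph (Fin 3)) ↪g attachPathTriangle G v m where
  toFun := ![.inr (.inl ⟨m - 1, by omega⟩), .inr (.inr 0), .inr (.inr 1)]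
  inj' := by
    intro a b h
    fin_cases a <;> fin_cases b <;> simp_all
  map_rel_iff' := attachPathTriangle_adj_triangle hm _ _

variable (m) in
def attachPathTriangle.depth : V ⊕ (Fin m ⊕ Fin 2) → ℕ :=
  Sum.elim (fun _ => 0) (Sum.elim (fun j => j + 1) fun _ => m + 1)

theorem attachPathTriangle.crossing_depth_eq {i : Fin m} (hi : (i : ℕ) + 1 < m)
    (a b : V ⊕ (Fin m ⊕ Fin 2))
    (hab : (attachPathTriangle G v m).Adj a b) (ha : a ∈ {w | depth m w ≤ (i : ℕ) + 1})
    (hb : b ∉ {w | depth m w ≤ (i : ℕ) + 1}) :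
    s(a, b) = s(.inr (.inl i), .inr (.inl ⟨i + 1, hi⟩)) := by
  rcases a with x | j | t <;> rcases b with y | k | t' <;>
    simp only [depth, Set.mem_ofPred_eq, Sum.elim_inl, Sum.elim_inr] at ha hb <;>
    simp [attachPathTriangle] at hab <;> (try simp [Fin.ext_iff]) <;> omega

theorem attachPathTriangle.crossing_base_eq (hm : 0 < m) (a b : V ⊕ (Fin m ⊕ Fin 2))
    (hab : (attachPathTriangle G v m).Adj a b) (ha : a ∈ Set.range Sum.inl)
    (hb : b ∉ Set.range Sum.inl) :
    s(a, b) = s(.inl v, .inr (.inl ⟨0, hm⟩)) := by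
  obtain ⟨x, rfl⟩ := ha
  rcases b with y | j | t
  · exact absurd ⟨y, rfl⟩ hb
  · obtain ⟨hj, rfl⟩ := attachPathTriangle_adj_inl_path.mp hab
    rw [show j = ⟨0, hm⟩ from Fin.ext hj]
  · simp [attachPathTriangle] at hab

theorem attachPathTriangle.support_subset_range_of_isCycle (hm : 0 < m)
    {u : V ⊕ (Fin m ⊕ Fin 2)} {p : (attachPathTriangle G v m).Walk u u} (hp : p.IsCycle) :
    (∀ x ∈ p.support, x ∈ Set.range (embBase G v m)) ∨
      ∀ x ∈ p.support, x ∈ Set.range (embTriangle G v hm) := by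
  by_cases hbase : ∃ x ∈ p.support, x ∈ Set.range (embBase G v m)
  · obtain ⟨x, hx, hxS⟩ := hbase
    exact .inl (hp.support_subset_of_forall_crossing_eq (crossing_base_eq hm) hx hxS)
  push Not at hbase
  refine .inr fun x hx => ?_
  rcases x with y | i | t
  · exact absurd ⟨y, rfl⟩ (hbase _ hx)
  · by_cases hi : (i : ℕ) + 1 < m
    · -- the cycle would then be trapped in the attached path, which is a tree
      exfalso
      have hdepth := hp.support_subset_of_forall_crossing_eq (crossing_depth_eq hi) hx
        (by simp [depth])
      obtain ⟨z, hz, hzr⟩ :=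
        (pathGraph_isAcyclic m).exists_mem_support_notMem_range (embPath G v m) hp
      rcases z with z | j | t
      · exact hbase _ hz ⟨z, rfl⟩
      · exact hzr ⟨j, rfl⟩
      · have := hdepth _ hz
        simp [depth] at this
        omega
    · refine ⟨0, ?_⟩
      change (.inr (.inl ⟨m - 1, _⟩) : V ⊕ (Fin m ⊕ Fin 2)) = _
      congr
      omega
  · fin_cases t
    exacts [⟨1, rfl⟩, ⟨2, rfl⟩]

theorem attachPathTriangle.connected (hm : 0 < m) (hG : G.Connected) :
    (attachPathTriangle G v m).Connected := by
  have hpath (i : Fin m) : (attachPathTriangle G v m).Reachable (.inl v) (.inr (.inl i)) := by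
    have h0 : (attachPathTriangle G v m).Adj (.inl v) (.inr (.inl ⟨0, hm⟩)) := by simp
    exact h0.reachable.trans ((pathGraph_preconnected m _ i).map (embPath G v m).toHom)
  rw [connected_iff_exists_forall_reachable]
  refine ⟨.inl v, ?_⟩
  rintro (x | i | t)
  · exact (hG v x).map (embBase G v m).toHom
  · exact hpath i
  · have hlast :
        (attachPathTriangle G v m).Adj (.inr (.inl ⟨m - 1, by omega⟩)) (.inr (.inr t)) := by
      fin_cases t <;> simp [attachPathTriangle]
    exact (hpath _).trans hlast.reachable

theorem isCactus_attachPathTriangle (hm : 0 < m) (hG : IsCactus G) :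
    IsCactus (attachPathTriangle G v m) := by
  refine ⟨attachPathTriangle.connected hm hG.1, fun u w p q hp hq hne => ?_⟩
  have hdisj : Disjoint (Set.range (attachPathTriangle.embBase G v m))
      (Set.range (attachPathTriangle.embTriangle G v hm)) := by
    rw [Set.disjoint_left]
    rintro _ ⟨x, rfl⟩ ⟨t, ht⟩
    fin_cases t <;> exact Sum.inr_ne_inl ht
  have hempty {a b : V ⊕ (Fin m ⊕ Fin 2)} {r : (attachPathTriangle G v m).Walk a a}
      {r' : (attachPathTriangle G v m).Walk b b}
      (hr : ∀ x ∈ r.support, x ∈ Set.range (attachPathTriangle.embBase G v m))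
      (hr' : ∀ x ∈ r'.support, x ∈ Set.range (attachPathTriangle.embTriangle G v hm)) :
      {x | x ∈ r.support} ∩ {x | x ∈ r'.support} = ∅ :=
    Set.eq_empty_of_forall_notMem fun x hx => hdisj.ne_of_mem (hr x hx.1) (hr' x hx.2) rfl
  rcases attachPathTriangle.support_subset_range_of_isCycle hm hp with hpB | hpT <;>
    rcases attachPathTriangle.support_subset_range_of_isCycle hm hq with hqB | hqT
  · exact hG.2.ncard_le_one_of_support_subset_range _ hp hq hpB hqB hne
  · simp [hempty hpB hqT]
  · rw [Set.inter_comm, hempty hqB hpT, Set.ncard_empty]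
    exact zero_le_one
  · exact isCactus_top_fin_three.2.ncard_le_one_of_support_subset_range _ hp hq hpT hqT hne

end AttachPathTriangle

theorem InT.isCactus {V : Type} {G : SimpleGraph V} (h : InT V G) : IsCactus G := by
  induction h with
  | base => exact isCactus_top_fin_three
  | iso _ he ih => exact ih.of_iso he.some
  | evenPath v m _ hm _ _ ih => exact isCactus_attachPath hm ih
  | oddPathTriangle v m _ hm _ ih => exact isCactus_attachPathTriangle hm.pos ih

/-- Every graph in the family `𝔗′` is a cactus: it is connected and no two of its
distinct cycles share more than one vertex. -/
theorem stmt_17 (V : Type) (G : SimpleGraph V) (h : InT' V G) :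
    G.Connected ∧ NoTwoCyclesShare G := by
  rcases h with hT | ⟨n, -, hn, ⟨e⟩⟩ | ⟨n, -, hn, ⟨e⟩⟩
  · exact hT.isCactus
  · obtain ⟨k, rfl⟩ := Nat.exists_eq_add_of_le' hn
    exact (isCactus_pathGraph (k + 1)).of_iso e.symm
  · obtain ⟨k, rfl⟩ := Nat.exists_eq_add_of_le' hn
    exact (isCactus_cycleGraph k).of_iso e.symm
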